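/- Let n ≥ 2 and w ∈ 𝔻 with |w| < (n−1)/(n+1), and let B(z) = ((z−w)/(1−w̄z))ⁿ. Then |B'(z)| > 1 for every z on the unit circle; in particular B has no fixed point z₀ on ∂𝔻 with |B'(z₀)| ≤ 1, so B is elliptic (its Denjoy–Wolff point lies in 𝔻). -/

import Mathlib

/-!
On the unit circle `|B'(z)| = n (1 - |w|²) / |1 - w̄ z|² ≥ n (1 - |w|) / (1 + |w|)`, and the
right-hand side exceeds `1` exactly when `|w| < (n - 1) / (n + 1)`.

For the interior fixed point: for `w ≠ 0` the fixed points of `B` are the roots of the degree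
`n + 1` polynomial `(z - w)ⁿ - z (1 - w̄ z)ⁿ`, and its root set is symmetric under `z ↦ 1 / z̄`.
If no root lay in `𝔻`, all `n + 1` roots would lie on the circle, and they would be simple, since
a double root `z` there forces `|B'(z)| = 1`. But a continuous argument of `B(e^{iθ}) / e^{iθ}`
has derivative `|B'(e^{iθ})| - 1 > 0` and increases by `2π (n - 1)` per turn, so `B` has at most
`n - 1` fixed points on the circle.
-/

open Complex ComplexConjugate Polynomial
open scoped Real

noncomputable def unicriticalBlaschke (n : ℕ) (w z : ℂ) : ℂ :=
  ((z - w) / (1 - conj w * z)) ^ n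

noncomputable def fixedPointPoly (n : ℕ) (w : ℂ) : ℂ[X] :=
  (X - C w) ^ n - X * (1 - C (conj w) * X) ^ n

-- A continuous argument of `θ ↦ B(e^{iθ}) / e^{iθ}`, see `unicriticalBlaschke_exp_mul_I`.
noncomputable def blaschkeDivArg (n : ℕ) (w : ℂ) (θ : ℝ) : ℝ :=
  (n - 1) * θ - 2 * n * arg (1 - conj w * exp (θ * I))

lemma card_le_floor_sub_floor {f : ℝ → ℝ} {a b : ℝ} (hab : a ≤ b)
    (hf : StrictMonoOn f (Set.Icc a b)) {S : Finset ℝ}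
    (hS : ∀ x ∈ S, x ∈ Set.Ioc a b ∧ ∃ k : ℤ, f x = k) :
    (S.card : ℤ) ≤ ⌊f b⌋ - ⌊f a⌋ := by
  have hmaps : ∀ x ∈ S, ⌊f x⌋ ∈ Finset.Ioc ⌊f a⌋ ⌊f b⌋ := by
    intro x hx
    obtain ⟨⟨hax, hxb⟩, k, hk⟩ := hS x hx
    have hlt : f a < f x := hf ⟨le_rfl, hax.le.trans hxb⟩ ⟨hax.le, hxb⟩ hax
    have hle : f x ≤ f b := hf.monotoneOn ⟨hax.le, hxb⟩ ⟨hax.le.trans hxb, le_rfl⟩ hxb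
    rw [Finset.mem_Ioc, hk, Int.floor_intCast]
    exact ⟨Int.floor_lt.mpr (hk ▸ hlt), Int.le_floor.mpr (hk ▸ hle)⟩
  have hinj : Set.InjOn (fun x => ⌊f x⌋) S := by
    intro x hx y hy hxy
    obtain ⟨hxI, k, hk⟩ := hS x hx
    obtain ⟨hyI, l, hl⟩ := hS y hy
    simp only [hk, hl, Int.floor_intCast] at hxy
    exact hf.injOn (Set.Ioc_subset_Icc_self hxI) (Set.Ioc_subset_Icc_self hyI)
      (by rw [hk, hl, hxy])
  have hfab : ⌊f a⌋ ≤ ⌊f b⌋ := Int.floor_le_floor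
    (hf.monotoneOn (Set.left_mem_Icc.mpr hab) (Set.right_mem_Icc.mpr hab) hab)
  rw [← Int.card_Ioc_of_le _ _ hfab]
  exact_mod_cast Finset.card_le_card_of_injOn _ hmaps hinj

section UnicriticalBlaschke

variable {n : ℕ} {w z : ℂ}

lemma norm_lt_one_of_one_add_norm_lt (hw : 1 + ‖w‖ < n * (1 - ‖w‖)) : ‖w‖ < 1 := by
  by_contra! h
  nlinarith [norm_nonneg w, (Nat.cast_nonneg n : (0 : ℝ) ≤ n)]

lemma ne_zero_of_one_add_norm_lt (hw : 1 + ‖w‖ < n * (1 - ‖w‖)) : n ≠ 0 := by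
  rintro rfl
  simp only [CharP.cast_eq_zero, zero_mul] at hw
  linarith [norm_nonneg w]

lemma one_add_norm_lt_of_norm_lt (hw : ‖w‖ < ((n : ℝ) - 1) / ((n : ℝ) + 1)) :
    1 + ‖w‖ < n * (1 - ‖w‖) := by
  rw [lt_div_iff₀ (by positivity)] at hw
  linarith

lemma one_sub_conj_mul_ne_zero (hw : ‖w‖ < 1) (hz : ‖z‖ ≤ 1) : 1 - conj w * z ≠ 0 := by
  refine sub_ne_zero.mpr fun h => ?_
  have : ‖conj w * z‖ < 1 := by
    rw [norm_mul, norm_conj]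
    nlinarith [norm_nonneg w, norm_nonneg z]
  simp [← h] at this

lemma norm_one_sub_conj_mul_le (hz : ‖z‖ = 1) : ‖1 - conj w * z‖ ≤ 1 + ‖w‖ := by
  simpa [hz] using norm_sub_le (1 : ℂ) (conj w * z)

lemma norm_one_sub_conj_mul_eq (hz : ‖z‖ = 1) : ‖1 - conj w * z‖ = ‖z - w‖ := by
  have hzz : conj z * z = 1 := by
    rw [← normSq_eq_conj_mul_self, normSq_eq_norm_sq, hz]; norm_num
  have : conj (1 - conj w * z) = conj z * (z - w) := by
    simp only [map_sub, map_one, map_mul, conj_conj]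
    linear_combination -hzz
  rw [← norm_conj, this, norm_mul, norm_conj, hz, one_mul]

lemma norm_one_sub_conj_mul_self (hw : ‖w‖ < 1) : ‖1 - conj w * w‖ = 1 - ‖w‖ ^ 2 := by
  have : 1 - conj w * w = ((1 - ‖w‖ ^ 2 : ℝ) : ℂ) := by
    rw [← normSq_eq_conj_mul_self, normSq_eq_norm_sq]; push_cast; ring
  rw [this, norm_real, Real.norm_of_nonneg (by nlinarith [norm_nonneg w])]

lemma sq_norm_one_sub_conj_mul_lt (hw : 1 + ‖w‖ < n * (1 - ‖w‖)) (hz : ‖z‖ = 1) :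
    ‖1 - conj w * z‖ ^ 2 < n * (1 - ‖w‖ ^ 2) := by
  have hle := norm_one_sub_conj_mul_le (w := w) hz
  calc ‖1 - conj w * z‖ ^ 2 ≤ (1 + ‖w‖) ^ 2 := by gcongr
    _ < n * (1 - ‖w‖) * (1 + ‖w‖) := by nlinarith [norm_nonneg w]
    _ = n * (1 - ‖w‖ ^ 2) := by ring

lemma hasDerivAt_unicriticalBlaschke (hd : 1 - conj w * z ≠ 0) :
    HasDerivAt (unicriticalBlaschke n w)
      (n * ((z - w) / (1 - conj w * z)) ^ (n - 1) *
        ((1 - conj w * w) / (1 - conj w * z) ^ 2)) z := by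
  have hnum : HasDerivAt (fun z => z - w) 1 z := (hasDerivAt_id z).sub_const w
  have hden : HasDerivAt (fun z => 1 - conj w * z) (-conj w) z := by
    simpa using ((hasDerivAt_id z).const_mul (conj w)).const_sub 1
  exact ((hnum.div hden hd).pow n).congr_deriv (by simp only [Pi.div_apply]; ring)

lemma norm_deriv_unicriticalBlaschke (hw : ‖w‖ < 1) (hz : ‖z‖ = 1) :
    ‖deriv (unicriticalBlaschke n w) z‖ = n * (1 - ‖w‖ ^ 2) / ‖1 - conj w * z‖ ^ 2 := by
  have hd := one_sub_conj_mul_ne_zero hw hz.le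
  have hφ : ‖(z - w) / (1 - conj w * z)‖ = 1 := by
    rw [norm_div, ← norm_one_sub_conj_mul_eq hz, div_self (norm_ne_zero_iff.mpr hd)]
  rw [(hasDerivAt_unicriticalBlaschke hd).deriv, norm_mul, norm_mul, norm_pow, hφ, one_pow,
    mul_one, norm_natCast, norm_div, norm_pow, norm_one_sub_conj_mul_self hw, mul_div_assoc]

lemma one_lt_norm_deriv_unicriticalBlaschke (hw : 1 + ‖w‖ < n * (1 - ‖w‖)) (hz : ‖z‖ = 1) :
    1 < ‖deriv (unicriticalBlaschke n w) z‖ := by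
  have hw1 := norm_lt_one_of_one_add_norm_lt hw
  have hd := one_sub_conj_mul_ne_zero hw1 hz.le
  rw [norm_deriv_unicriticalBlaschke hw1 hz, one_lt_div (pow_pos (norm_pos_iff.mpr hd) 2)]
  exact sq_norm_one_sub_conj_mul_lt hw hz

lemma eval_fixedPointPoly :
    (fixedPointPoly n w).eval z = (z - w) ^ n - z * (1 - conj w * z) ^ n := by
  simp [fixedPointPoly]

lemma eval_derivative_fixedPointPoly :
    (derivative (fixedPointPoly n w)).eval z = n * (z - w) ^ (n - 1) - (1 - conj w * z) ^ n
      + n * conj w * z * (1 - conj w * z) ^ (n - 1) := by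
  simp only [fixedPointPoly, derivative_sub, derivative_mul, derivative_pow, derivative_X,
    derivative_C, derivative_one, eval_sub, eval_mul, eval_add, eval_pow, eval_zero, eval_X,
    eval_C, eval_one]
  ring

lemma unicriticalBlaschke_eq_self_iff (hd : 1 - conj w * z ≠ 0) :
    unicriticalBlaschke n w z = z ↔ (fixedPointPoly n w).IsRoot z := by
  rw [IsRoot, eval_fixedPointPoly, unicriticalBlaschke, div_pow, div_eq_iff (pow_ne_zero n hd),
    sub_eq_zero]

lemma natDegree_fixedPointPoly (hw : w ≠ 0) : (fixedPointPoly n w).natDegree = n + 1 := by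
  unfold fixedPointPoly
  compute_degree!
  · exact ⟨by omega, fun h => (hw h).elim⟩
  all_goals omega

lemma eval_inv_conj_fixedPointPoly (hz : z ≠ 0) :
    (fixedPointPoly n w).eval (conj z)⁻¹ =
      -(conj z)⁻¹ ^ (n + 1) * conj ((fixedPointPoly n w).eval z) := by
  have hu : (conj z)⁻¹ * conj z = 1 := inv_mul_cancel₀ (by simpa using hz)
  simp only [eval_fixedPointPoly, map_sub, map_pow, map_mul, map_one, conj_conj]
  generalize conj z = u at *
  rw [show u⁻¹ - w = u⁻¹ * (1 - w * u) by linear_combination w * hu,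
    show 1 - conj w * u⁻¹ = u⁻¹ * (u - conj w) by linear_combination -hu, mul_pow, mul_pow]
  linear_combination (-(u⁻¹ ^ n * (1 - w * u) ^ n)) * hu

lemma not_isRoot_derivative_fixedPointPoly (hw : 1 + ‖w‖ < n * (1 - ‖w‖)) (hz : ‖z‖ = 1)
    (hroot : (fixedPointPoly n w).IsRoot z) : ¬ (derivative (fixedPointPoly n w)).IsRoot z := by
  have hw1 := norm_lt_one_of_one_add_norm_lt hw
  have hn := ne_zero_of_one_add_norm_lt hw
  have hd := one_sub_conj_mul_ne_zero hw1 hz.le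
  rw [IsRoot, eval_fixedPointPoly, sub_eq_zero] at hroot
  rw [IsRoot, eval_derivative_fixedPointPoly]
  intro hderiv
  -- multiply the derivative by `(z - w) (1 - w̄ z)` and substitute the root equation
  have hfactor : (1 - conj w * z) ^ n *
      (n * z * (1 - conj w * w) - (z - w) * (1 - conj w * z)) = 0 := by
    linear_combination ((z - w) * (1 - conj w * z)) * hderiv
      - n * (1 - conj w * z) * pow_sub_one_mul hn (z - w)
      - n * conj w * z * (z - w) * pow_sub_one_mul hn (1 - conj w * z)
      - n * (1 - conj w * z) * hroot
  have hnorm := congrArg norm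
    (sub_eq_zero.mp ((mul_eq_zero.mp hfactor).resolve_left (pow_ne_zero n hd)))
  simp only [norm_mul, Complex.norm_natCast, hz, norm_one_sub_conj_mul_self hw1,
    ← norm_one_sub_conj_mul_eq hz] at hnorm
  nlinarith [sq_norm_one_sub_conj_mul_lt hw hz]

lemma hasDerivAt_arg_one_sub_mul_exp (hw : ‖w‖ < 1) (θ : ℝ) :
    HasDerivAt (fun θ : ℝ => arg (1 - w * exp (θ * I)))
      (-(w * exp (θ * I) / (1 - w * exp (θ * I))).re) θ := by
  have hexp : HasDerivAt (fun θ : ℝ => exp (θ * I)) (exp (θ * I) * I) θ := by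
    simpa using ((hasDerivAt_id (θ : ℂ)).mul_const I).cexp.comp_ofReal
  have hslit : 1 - w * exp (θ * I) ∈ slitPlane := by
    simpa [sub_eq_add_neg] using
      mem_slitPlane_of_norm_lt_one (z := -(w * exp (θ * I))) (by simpa using hw)
  have hlog := ((hexp.const_mul w).const_sub 1).clog_real hslit
  have := imCLM.hasFDerivAt.comp_hasDerivAt θ hlog
  simp only [Function.comp_def, imCLM_apply, log_im] at this
  refine this.congr_deriv ?_
  rw [show -(w * (exp (θ * I) * I)) / (1 - w * exp (θ * I))
      = w * exp (θ * I) / (1 - w * exp (θ * I)) * -I by ring]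
  simp

lemma hasDerivAt_blaschkeDivArg (hw : ‖w‖ < 1) (θ : ℝ) :
    HasDerivAt (blaschkeDivArg n w)
      (n * (1 - ‖w‖ ^ 2) / ‖1 - conj w * exp (θ * I)‖ ^ 2 - 1) θ := by
  have harg := hasDerivAt_arg_one_sub_mul_exp (w := conj w) (by simpa using hw) θ
  refine (((hasDerivAt_id θ).const_mul ((n : ℝ) - 1)).sub
    (harg.const_mul (2 * (n : ℝ)))).congr_deriv ?_
  have hv : ‖w‖ = ‖conj w * exp (θ * I)‖ := by simp [norm_exp_ofReal_mul_I]
  have hd : 1 - conj w * exp (θ * I) ≠ 0 :=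
    one_sub_conj_mul_ne_zero hw (norm_exp_ofReal_mul_I θ).le
  rw [hv]
  generalize conj w * exp (θ * I) = v at hd ⊢
  have hD : normSq (1 - v) ≠ 0 := normSq_eq_zero.not.mpr hd
  rw [← normSq_eq_norm_sq, ← normSq_eq_norm_sq, div_re]
  field_simp
  simp only [normSq_apply, sub_re, one_re, sub_im, one_im]
  ring

lemma strictMono_blaschkeDivArg (hw : 1 + ‖w‖ < n * (1 - ‖w‖)) :
    StrictMono (blaschkeDivArg n w) := by
  have hw1 := norm_lt_one_of_one_add_norm_lt hw
  refine strictMono_of_hasDerivAt_pos (hasDerivAt_blaschkeDivArg hw1) fun θ => ?_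
  have hd := one_sub_conj_mul_ne_zero hw1 (norm_exp_ofReal_mul_I θ).le
  rw [sub_pos, one_lt_div (pow_pos (norm_pos_iff.mpr hd) 2)]
  exact sq_norm_one_sub_conj_mul_lt hw (norm_exp_ofReal_mul_I θ)

lemma blaschkeDivArg_pi :
    blaschkeDivArg n w π = blaschkeDivArg n w (-π) + 2 * π * (n - 1) := by
  simp only [blaschkeDivArg, ofReal_neg, neg_mul, exp_neg, exp_pi_mul_I]
  norm_num
  ring

lemma unicriticalBlaschke_exp_mul_I (hw : ‖w‖ < 1) (θ : ℝ) :
    unicriticalBlaschke n w (exp (θ * I)) =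
      exp (n * (θ - 2 * arg (1 - conj w * exp (θ * I))) * I) := by
  set z := exp (θ * I)
  set d := 1 - conj w * z
  have hz : ‖z‖ = 1 := norm_exp_ofReal_mul_I θ
  have hd : d ≠ 0 := one_sub_conj_mul_ne_zero hw hz.le
  have hzz : z * conj z = 1 := by rw [mul_conj, normSq_eq_norm_sq, hz]; norm_num
  have hpolar : d = ‖d‖ * exp (arg d * I) := (norm_mul_exp_arg_mul_I d).symm
  have hpolar' : conj d = ‖d‖ * exp (-(arg d * I)) := by
    conv_lhs => rw [hpolar]
    rw [map_mul, conj_ofReal, ← exp_conj, map_mul, conj_ofReal, conj_I, mul_neg]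
  have hnum : z - w = z * conj d := by
    simp only [d, map_sub, map_one, map_mul, conj_conj]
    linear_combination w * hzz
  have hφ : (z - w) / d = exp ((θ - 2 * arg d) * I) := by
    rw [hnum, hpolar', div_eq_iff hd]
    calc z * (‖d‖ * exp (-(arg d * I))) = ‖d‖ * exp (θ * I + -(arg d * I)) := by
          rw [exp_add]; ring
      _ = ‖d‖ * exp ((θ - 2 * arg d) * I + arg d * I) := by ring_nf
      _ = exp ((θ - 2 * arg d) * I) * (‖d‖ * exp (arg d * I)) := by rw [exp_add]; ring
      _ = exp ((θ - 2 * arg d) * I) * d := by rw [← hpolar]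
  rw [unicriticalBlaschke, hφ, ← exp_nat_mul, ← mul_assoc]

lemma exists_blaschkeDivArg_eq_of_isFixedPt (hw : ‖w‖ < 1) {θ : ℝ}
    (hfix : unicriticalBlaschke n w (exp (θ * I)) = exp (θ * I)) :
    ∃ k : ℤ, blaschkeDivArg n w θ = k * (2 * π) := by
  rw [unicriticalBlaschke_exp_mul_I hw, exp_eq_exp_iff_exists_int] at hfix
  obtain ⟨k, hk⟩ := hfix
  refine ⟨k, ofReal_injective (mul_right_cancel₀ I_ne_zero ?_)⟩
  rw [blaschkeDivArg]
  push_cast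
  linear_combination hk

lemma card_le_of_isFixedPt_of_norm_eq_one (hw : 1 + ‖w‖ < n * (1 - ‖w‖)) {S : Finset ℂ}
    (hS : ∀ z ∈ S, ‖z‖ = 1 ∧ unicriticalBlaschke n w z = z) : (S.card : ℤ) ≤ n - 1 := by
  have harg : Set.InjOn arg S := fun z hz z' hz' h =>
    ext_norm_arg (by rw [(hS z hz).1, (hS z' hz').1]) h
  have hf : StrictMono fun θ => blaschkeDivArg n w θ / (2 * π) :=
    (strictMono_blaschkeDivArg hw).div_const (by positivity)
  rw [← Finset.card_image_of_injOn harg]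
  refine (card_le_floor_sub_floor (a := -π) (b := π) (by linarith [Real.pi_pos])
    (hf.strictMonoOn _) ?_).trans_eq ?_
  · simp only [Finset.mem_image]
    rintro _ ⟨z, hz, rfl⟩
    refine ⟨⟨neg_pi_lt_arg z, arg_le_pi z⟩, ?_⟩
    have hexp : exp (arg z * I) = z := by
      simpa [(hS z hz).1] using norm_mul_exp_arg_mul_I z
    have hfix : unicriticalBlaschke n w (exp (arg z * I)) = exp (arg z * I) := by
      rw [hexp]; exact (hS z hz).2
    obtain ⟨k, hk⟩ :=
      exists_blaschkeDivArg_eq_of_isFixedPt (norm_lt_one_of_one_add_norm_lt hw) hfix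
    exact ⟨k, by rw [hk]; field_simp⟩
  · rw [blaschkeDivArg_pi, add_div,
      show 2 * π * (n - 1) / (2 * π) = ((n - 1 : ℤ) : ℝ) by push_cast; field_simp,
      Int.floor_add_intCast]
    ring

lemma norm_eq_one_of_isRoot_fixedPointPoly (hw : ‖w‖ < 1)
    (hno : ∀ z, ‖z‖ < 1 → unicriticalBlaschke n w z ≠ z)
    (hroot : (fixedPointPoly n w).IsRoot z) : ‖z‖ = 1 := by
  have hinside : ∀ z, ‖z‖ < 1 → ¬ (fixedPointPoly n w).IsRoot z := fun z hz hroot =>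
    hno z hz ((unicriticalBlaschke_eq_self_iff (one_sub_conj_mul_ne_zero hw hz.le)).mpr hroot)
  rcases lt_trichotomy ‖z‖ 1 with h | h | h
  · exact absurd hroot (hinside z h)
  · exact h
  · have hz : z ≠ 0 := by rintro rfl; norm_num at h
    refine absurd ?_ (hinside (conj z)⁻¹ ?_)
    · rw [IsRoot, eval_inv_conj_fixedPointPoly hz, hroot.eq_zero, map_zero, mul_zero]
    · rw [norm_inv, norm_conj]; exact inv_lt_one_of_one_lt₀ h

lemma nodup_roots_fixedPointPoly (hw : 1 + ‖w‖ < n * (1 - ‖w‖)) (hp : fixedPointPoly n w ≠ 0)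
    (hcircle : ∀ z ∈ (fixedPointPoly n w).roots, ‖z‖ = 1) :
    (fixedPointPoly n w).roots.Nodup := by
  refine Multiset.nodup_iff_count_le_one.mpr fun z => ?_
  rw [count_roots]
  by_contra! h
  obtain ⟨hroot, hderiv⟩ := (one_lt_rootMultiplicity_iff_isRoot hp).mp h
  exact not_isRoot_derivative_fixedPointPoly hw (hcircle z ((mem_roots hp).mpr hroot)) hroot
    hderiv

theorem exists_isFixedPt_unicriticalBlaschke (hw : 1 + ‖w‖ < n * (1 - ‖w‖)) :
    ∃ z, ‖z‖ < 1 ∧ unicriticalBlaschke n w z = z := by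
  have hw1 := norm_lt_one_of_one_add_norm_lt hw
  rcases eq_or_ne w 0 with rfl | hw0
  · exact ⟨0, by simp, by simp [unicriticalBlaschke, ne_zero_of_one_add_norm_lt hw]⟩
  by_contra! hno
  have hdeg := natDegree_fixedPointPoly (n := n) hw0
  have hp : fixedPointPoly n w ≠ 0 := by rintro h; simp [h] at hdeg
  have hcircle : ∀ z ∈ (fixedPointPoly n w).roots, ‖z‖ = 1 := fun z hz =>
    norm_eq_one_of_isRoot_fixedPointPoly hw1 hno (isRoot_of_mem_roots hz)
  have hcard : (fixedPointPoly n w).roots.toFinset.card = n + 1 := by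
    rw [Multiset.toFinset_card_of_nodup (nodup_roots_fixedPointPoly hw hp hcircle),
      IsAlgClosed.card_roots_eq_natDegree, hdeg]
  have hfixed : ∀ z ∈ (fixedPointPoly n w).roots.toFinset,
      ‖z‖ = 1 ∧ unicriticalBlaschke n w z = z := by
    intro z hz
    have hz' := Multiset.mem_toFinset.mp hz
    exact ⟨hcircle z hz', (unicriticalBlaschke_eq_self_iff
      (one_sub_conj_mul_ne_zero hw1 (hcircle z hz').le)).mpr (isRoot_of_mem_roots hz')⟩
  have := card_le_of_isFixedPt_of_norm_eq_one hw hfixed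
  omega

end UnicriticalBlaschke

theorem stmt_19_general (n : ℕ) (w : ℂ)
    (hw : ‖w‖ < ((n : ℝ) - 1) / ((n : ℝ) + 1))
    (B : ℂ → ℂ)
    (hB : B = fun z => ((z - w) / (1 - (starRingEnd ℂ) w * z)) ^ n) :
    (∀ z : ℂ, ‖z‖ = 1 → 1 < ‖deriv B z‖) ∧
      (¬ ∃ z : ℂ, ‖z‖ = 1 ∧ B z = z ∧ ‖deriv B z‖ ≤ 1) ∧
      (∃ z₀ : ℂ, ‖z₀‖ < 1 ∧ B z₀ = z₀) := by
  have hw' := one_add_norm_lt_of_norm_lt hw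
  have hderiv : ∀ z : ℂ, ‖z‖ = 1 → 1 < ‖deriv B z‖ := fun z hz =>
    hB ▸ one_lt_norm_deriv_unicriticalBlaschke hw' hz
  exact ⟨hderiv, fun ⟨z, hz, _, hle⟩ => (hderiv z hz).not_ge hle,
    hB ▸ exists_isFixedPt_unicriticalBlaschke hw'⟩

theorem stmt_19 (n : ℕ) (hn : 2 ≤ n) (w : ℂ)
    (hw : ‖w‖ < ((n : ℝ) - 1) / ((n : ℝ) + 1))
    (B : ℂ → ℂ)
    (hB : B = fun z => ((z - w) / (1 - (starRingEnd ℂ) w * z)) ^ n) :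
    (∀ z : ℂ, ‖z‖ = 1 → 1 < ‖deriv B z‖) ∧
      (¬ ∃ z : ℂ, ‖z‖ = 1 ∧ B z = z ∧ ‖deriv B z‖ ≤ 1) ∧
      (∃ z₀ : ℂ, ‖z₀‖ < 1 ∧ B z₀ = z₀) :=
  stmt_19_general n w hw B hB
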